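/- arXiv:2302.05052 — 2 statements merged into one kernel-verified Lean document; each statement's English description precedes it below -/
import Mathlib

section
/- Let πz, πr ∈ (0,1) and πẑ ∈ [0,1] be real numbers with πẑ ≠ πz. Then there exist two tuples (p00, p01, p10, p11) and (p00', p01', p10', p11') of nonnegative reals, each satisfying the three marginal constraints (p00+p01+p10+p11 = 1, p10+p11 = πz, p01+p11 = πr), such that (1−πẑ)·p01/(1−πz) + πẑ·p11/πz ≠ (1−πẑ)·p01'/(1−πz) + πẑ·p11'/πz. (Non-identification of the potential-outcome probability in Deconfounder, Example 1.) -/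
/-!
Once `πz` and `πr` are fixed, the marginal constraints leave one free parameter, `p11`, which
may range over the Fréchet interval `[max 0 (πz + πr - 1), min πz πr]`; this interval is
nondegenerate for `πz, πr ∈ (0,1)`. Along it the g-formula value is affine in `p11` with slope
`(πhat - πz) / (πz (1 - πz))`, which is nonzero as soon as `πhat ≠ πz`, so the two endpoints of
the interval give different values.
-/

def gFormula {K : Type*} [Field K] (πz πhat p01 p11 : K) : K :=
  (1 - πhat) * p01 / (1 - πz) + πhat * p11 / πz

lemma gFormula_sub_gFormula {K : Type*} [Field K] {πz πhat p01 p11 p01' p11' : K}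
    (hz : πz ≠ 0) (hz' : 1 - πz ≠ 0) (h : p01 + p11 = p01' + p11') :
    gFormula πz πhat p01 p11 - gFormula πz πhat p01' p11' =
      (πhat - πz) / (πz * (1 - πz)) * (p11 - p11') := by
  obtain rfl : p01 = p01' + p11' - p11 := by rw [← h]; ring
  unfold gFormula
  field_simp
  ring

lemma max_zero_add_sub_one_lt_min {πz πr : ℝ} (hz : πz ∈ Set.Ioo (0 : ℝ) 1)
    (hr : πr ∈ Set.Ioo (0 : ℝ) 1) : max 0 (πz + πr - 1) < min πz πr :=
  max_lt (lt_min hz.1 hr.1) (lt_min (by linarith [hr.2]) (by linarith [hz.2]))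

lemma joint_nonneg_of_mem_frechet {πz πr t : ℝ} (hl : max 0 (πz + πr - 1) ≤ t)
    (hu : t ≤ min πz πr) : 0 ≤ 1 - πz - πr + t ∧ 0 ≤ πr - t ∧ 0 ≤ πz - t ∧ 0 ≤ t := by
  rw [max_le_iff] at hl
  rw [le_min_iff] at hu
  refine ⟨?_, ?_, ?_, ?_⟩ <;> linarith

theorem deconfounder_non_identification_general
    (πz πr πhat : ℝ) (hz : πz ∈ Set.Ioo (0 : ℝ) 1) (hr : πr ∈ Set.Ioo (0 : ℝ) 1)
    (hne : πhat ≠ πz) :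
    ∃ p00 p01 p10 p11 p00' p01' p10' p11' : ℝ,
      0 ≤ p00 ∧ 0 ≤ p01 ∧ 0 ≤ p10 ∧ 0 ≤ p11 ∧
      0 ≤ p00' ∧ 0 ≤ p01' ∧ 0 ≤ p10' ∧ 0 ≤ p11' ∧
      p00 + p01 + p10 + p11 = 1 ∧ p10 + p11 = πz ∧ p01 + p11 = πr ∧
      p00' + p01' + p10' + p11' = 1 ∧ p10' + p11' = πz ∧ p01' + p11' = πr ∧
      (1 - πhat) * p01 / (1 - πz) + πhat * p11 / πz ≠
        (1 - πhat) * p01' / (1 - πz) + πhat * p11' / πz := by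
  set a := max 0 (πz + πr - 1)
  set b := min πz πr
  have hab : a < b := max_zero_add_sub_one_lt_min hz hr
  obtain ⟨ha00, ha01, ha10, ha11⟩ := joint_nonneg_of_mem_frechet le_rfl hab.le
  obtain ⟨hb00, hb01, hb10, hb11⟩ := joint_nonneg_of_mem_frechet hab.le le_rfl
  refine ⟨1 - πz - πr + a, πr - a, πz - a, a, 1 - πz - πr + b, πr - b, πz - b, b,
    ha00, ha01, ha10, ha11, hb00, hb01, hb10, hb11,
    by ring, by ring, by ring, by ring, by ring, by ring, ?_⟩
  have hz0 : πz ≠ 0 := hz.1.ne'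
  have hz1 : 1 - πz ≠ 0 := (sub_pos.2 hz.2).ne'
  change gFormula πz πhat _ _ ≠ gFormula πz πhat _ _
  rw [← sub_ne_zero, gFormula_sub_gFormula hz0 hz1 (by ring)]
  exact mul_ne_zero (div_ne_zero (sub_ne_zero.2 hne) (mul_ne_zero hz0 hz1))
    (sub_ne_zero.2 hab.ne)

/-- Non-identification of the potential-outcome probability in Deconfounder (Example 1):
given `πz, πr ∈ (0,1)`, `πhat ∈ [0,1]` with `πhat ≠ πz`, there are two nonnegative tuples
satisfying the three marginal constraints whose g-formula values differ. -/
theorem deconfounder_non_identification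
    (πz πr πhat : ℝ) (hz : πz ∈ Set.Ioo (0 : ℝ) 1) (hr : πr ∈ Set.Ioo (0 : ℝ) 1)
    (hhat : πhat ∈ Set.Icc (0 : ℝ) 1) (hne : πhat ≠ πz) :
    ∃ p00 p01 p10 p11 p00' p01' p10' p11' : ℝ,
      0 ≤ p00 ∧ 0 ≤ p01 ∧ 0 ≤ p10 ∧ 0 ≤ p11 ∧
      0 ≤ p00' ∧ 0 ≤ p01' ∧ 0 ≤ p10' ∧ 0 ≤ p11' ∧
      p00 + p01 + p10 + p11 = 1 ∧ p10 + p11 = πz ∧ p01 + p11 = πr ∧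
      p00' + p01' + p10' + p11' = 1 ∧ p10' + p11' = πz ∧ p01' + p11' = πr ∧
      (1 - πhat) * p01 / (1 - πz) + πhat * p11 / πz ≠
        (1 - πhat) * p01' / (1 - πz) + πhat * p11' / πz :=
  deconfounder_non_identification_general πz πr πhat hz hr hne
end

section
/- (Lemma 1.) Let πz ∈ (0,1), let q0, q1 ∈ ℝ with q1 ≠ q0, and let r0, r1 ∈ ℝ. Then there exists a unique tuple (p00, p01, p10, p11) ∈ ℝ⁴ satisfying the four linear equations: (i) p00 + p01 + p10 + p11 = 1; (ii) p10 + p11 = πz; (iii) p01·(1−q1)/(1−πz) + p11·q1/πz = r1; (iv) p01·(1−q0)/(1−πz) + p11·q0/πz = r0. Consequently, for any πẑ ∈ ℝ, the g-formula value (1−πẑ)·p01/(1−πz) + πẑ·p11/πz is uniquely determined by (πz, q0, q1, r0, r1). -/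
/-! Equations (iii) and (iv) say that `(p01 / (1 - πz), p11 / πz)` solves the 2×2 system with
rows `(1 - q1, q1)` and `(1 - q0, q0)`, whose determinant is `q0 - q1 ≠ 0`. Cramer's rule gives
that pair uniquely; rescaling recovers `p01` and `p11`, and then (i) and (ii) fix `p00` and `p10`.
The g-formula value depends on the solution only through that pair. -/

section MixtureSystem

variable {q0 q1 : ℝ}

theorem mixture_eq_of_eq (hq : q1 ≠ q0) {x y x' y' : ℝ}
    (h1 : x * (1 - q1) + y * q1 = x' * (1 - q1) + y' * q1)
    (h0 : x * (1 - q0) + y * q0 = x' * (1 - q0) + y' * q0) : x = x' ∧ y = y' := by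
  have hdet : q1 - q0 ≠ 0 := sub_ne_zero.mpr hq
  constructor
  · apply mul_left_cancel₀ hdet
    linear_combination q1 * h0 - q0 * h1
  · apply mul_left_cancel₀ hdet
    linear_combination (1 - q0) * h1 - (1 - q1) * h0

theorem exists_mixture_eq (hq : q1 ≠ q0) (r0 r1 : ℝ) :
    ∃ x y : ℝ, x * (1 - q1) + y * q1 = r1 ∧ x * (1 - q0) + y * q0 = r0 := by
  have hdet : q1 - q0 ≠ 0 := sub_ne_zero.mpr hq
  refine ⟨(q1 * r0 - q0 * r1) / (q1 - q0), ((1 - q0) * r1 - (1 - q1) * r0) / (q1 - q0), ?_, ?_⟩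
  · field_simp; ring
  · field_simp; ring

theorem eq_of_rescaled_mixture_eq (hq : q1 ≠ q0) {c d a b a' b' : ℝ} (hc : c ≠ 0) (hd : d ≠ 0)
    (h1 : a * (1 - q1) / c + b * q1 / d = a' * (1 - q1) / c + b' * q1 / d)
    (h0 : a * (1 - q0) / c + b * q0 / d = a' * (1 - q0) / c + b' * q0 / d) :
    a = a' ∧ b = b' := by
  obtain ⟨ha, hb⟩ := mixture_eq_of_eq hq (x := a / c) (y := b / d) (x' := a' / c) (y' := b' / d)
    (by linear_combination h1) (by linear_combination h0)
  exact ⟨(div_left_inj' hc).mp ha, (div_left_inj' hd).mp hb⟩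

end MixtureSystem

/-- Lemma 1: with a proxy variable satisfying `q1 ≠ q0`, the four linear equations have a
unique solution `(p00, p01, p10, p11)`, and consequently, for any prior `πhat`, the
g-formula value `(1-πhat)·p01/(1-πz) + πhat·p11/πz` is uniquely determined by
`(πz, q0, q1, r0, r1)`. -/
theorem proxy_identification
    (πz q0 q1 r0 r1 : ℝ) (hz : πz ∈ Set.Ioo (0 : ℝ) 1) (hq : q1 ≠ q0) :
    (∃! p : ℝ × ℝ × ℝ × ℝ,
        p.1 + p.2.1 + p.2.2.1 + p.2.2.2 = 1 ∧
        p.2.2.1 + p.2.2.2 = πz ∧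
        p.2.1 * (1 - q1) / (1 - πz) + p.2.2.2 * q1 / πz = r1 ∧
        p.2.1 * (1 - q0) / (1 - πz) + p.2.2.2 * q0 / πz = r0) ∧
    (∀ πhat p00 p01 p10 p11 p00' p01' p10' p11' : ℝ,
        (p00 + p01 + p10 + p11 = 1 ∧ p10 + p11 = πz ∧
          p01 * (1 - q1) / (1 - πz) + p11 * q1 / πz = r1 ∧
          p01 * (1 - q0) / (1 - πz) + p11 * q0 / πz = r0) →
        (p00' + p01' + p10' + p11' = 1 ∧ p10' + p11' = πz ∧
          p01' * (1 - q1) / (1 - πz) + p11' * q1 / πz = r1 ∧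
          p01' * (1 - q0) / (1 - πz) + p11' * q0 / πz = r0) →
        (1 - πhat) * p01 / (1 - πz) + πhat * p11 / πz =
          (1 - πhat) * p01' / (1 - πz) + πhat * p11' / πz) := by
  obtain ⟨hz0, hz1⟩ := hz
  have hc : 1 - πz ≠ 0 := sub_ne_zero.mpr hz1.ne'
  have hd : πz ≠ 0 := hz0.ne'
  obtain ⟨x, y, hx1, hx0⟩ := exists_mixture_eq hq r0 r1
  have hw1 : (1 - πz) * x * (1 - q1) / (1 - πz) + πz * y * q1 / πz = r1 := by
    rw [← hx1]; field_simp
  have hw0 : (1 - πz) * x * (1 - q0) / (1 - πz) + πz * y * q0 / πz = r0 := by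
    rw [← hx0]; field_simp
  refine ⟨⟨(1 - (1 - πz) * x - πz, (1 - πz) * x, πz - πz * y, πz * y),
    ⟨by ring, by ring, hw1, hw0⟩, ?_⟩, ?_⟩
  · rintro ⟨p00, p01, p10, p11⟩ ⟨hsum, hπ, h1, h0⟩
    obtain ⟨rfl, rfl⟩ := eq_of_rescaled_mixture_eq hq hc hd (h1.trans hw1.symm) (h0.trans hw0.symm)
    simp only [Prod.mk.injEq, and_true, true_and]
    constructor <;> linarith
  · rintro πhat - p01 - p11 - p01' - p11' ⟨-, -, h1, h0⟩ ⟨-, -, h1', h0'⟩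
    obtain ⟨rfl, rfl⟩ := eq_of_rescaled_mixture_eq hq hc hd (h1.trans h1'.symm) (h0.trans h0'.symm)
    rfl
end
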